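/- arXiv:2506.13728 — 8 statements merged into one kernel-verified Lean document; each statement's English description precedes it below -/
import Mathlib

section
/- Let β = 0 and λ ∈ (0,1]. Then the function u : T_m → ℝ defined by u(x) = (1-λ)^{|x|} satisfies -Δ_β u(x) = λ u(x) for all x ∈ T_m, and u(x_n) → 0 along every branch {x_n} of T_m. Hence every λ ∈ (0,1] is a principal eigenvalue of Δ_0. -/
open Filter Finset Topology

/-- The weight `p_β`: `1` if `β = 0`, and `β/(1-β)` otherwise. -/
noncomputable def pB (β : ℝ) : ℝ := if β = 0 then 1 else β / (1 - β)

/-- Vertices of the regular `m`-branching tree are finite sequences over `Fin m`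
(the root is `[]`, the successors of `x` are `i :: x`, the predecessor of `a :: t` is `t`,
and the level `|x|` is the list length).  The `β`-Laplacian on the tree. -/
noncomputable def lapB (m : ℕ) (β : ℝ) (u : List (Fin m) → ℝ) : List (Fin m) → ℝ
  | [] => (∑ i : Fin m, u [i]) / m - u []
  | a :: t =>
      (β * u t + (1 - β) * (∑ i : Fin m, u (i :: a :: t)) / m - u (a :: t)) *
        pB β ^ (-((a :: t).length : ℤ))

/-- A branch: an infinite path starting at the root, following successors. -/
def IsBranch (m : ℕ) (b : ℕ → List (Fin m)) : Prop :=
  b 0 = [] ∧ ∀ n, ∃ i : Fin m, b (n + 1) = i :: b n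

/-- Homogeneous Dirichlet boundary condition: `u → 0` along every branch. -/
def ZeroOnBoundary (m : ℕ) (u : List (Fin m) → ℝ) : Prop :=
  ∀ b : ℕ → List (Fin m), IsBranch m b → Tendsto (fun n => u (b n)) atTop (𝓝 0)

/-- `lam` is a principal eigenvalue of `Δ_β`: it is positive and admits a bounded
nonnegative nontrivial eigenfunction vanishing on the boundary. -/
def IsPrincipalEigenvalue (m : ℕ) (β lam : ℝ) : Prop :=
  0 < lam ∧ ∃ u : List (Fin m) → ℝ,
    (∃ M, ∀ x, |u x| ≤ M) ∧ (∀ x, 0 ≤ u x) ∧ u ≠ 0 ∧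
    (∀ x, -lapB m β u x = lam * u x) ∧ ZeroOnBoundary m u

/-- Membership in the set `A_β`. -/
def memA (m : ℕ) (β lam : ℝ) : Prop :=
  0 < lam ∧ ∃ v : List (Fin m) → ℝ, ∃ c C : ℝ, 0 < c ∧
    (∀ x, c < v x ∧ v x < C) ∧ ∀ x, lapB m β v x + lam * v x ≤ 0

/-- `λ₁(β) = sup A_β`. -/
noncomputable def lam1 (m : ℕ) (β : ℝ) : ℝ := sSup {lam | memA m β lam}

theorem pB_zero : pB 0 = 1 := if_pos rfl

theorem lapB_zero_pow_length {m : ℕ} (hm : m ≠ 0) (r : ℝ) (x : List (Fin m)) :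
    lapB m 0 (fun y => r ^ y.length) x = (r - 1) * r ^ x.length := by
  have hsum (k : ℕ) : (∑ _i : Fin m, r ^ k) / m = r ^ k := by
    rw [Finset.sum_const, Finset.card_univ, Fintype.card_fin, nsmul_eq_mul,
      mul_div_cancel_left₀ _ (Nat.cast_ne_zero.mpr hm)]
  cases x with
  | nil => simp only [lapB, List.length_nil, List.length_cons, hsum]; ring
  | cons a t =>
    simp only [lapB, pB_zero, one_zpow, mul_one, zero_mul, zero_add, sub_zero, one_mul,
      List.length_cons, hsum]
    ring

theorem IsBranch.length_eq {m : ℕ} {b : ℕ → List (Fin m)} (hb : IsBranch m b) (n : ℕ) :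
    (b n).length = n := by
  induction n with
  | zero => rw [hb.1, List.length_nil]
  | succ n ih =>
    obtain ⟨i, hi⟩ := hb.2 n
    rw [hi, List.length_cons, ih]

theorem zeroOnBoundary_comp_length {m : ℕ} {f : ℕ → ℝ} (hf : Tendsto f atTop (𝓝 0)) :
    ZeroOnBoundary m (fun y => f y.length) := fun b hb => by
  simpa only [hb.length_eq] using hf

theorem stmt0 (m : ℕ) (hm : 2 ≤ m) (lam : ℝ) (hl : 0 < lam) (hl1 : lam ≤ 1) :
    (∀ x : List (Fin m),
      -lapB m 0 (fun y => (1 - lam) ^ y.length) x = lam * (1 - lam) ^ x.length) ∧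
    ZeroOnBoundary m (fun y : List (Fin m) => (1 - lam) ^ y.length) ∧
    IsPrincipalEigenvalue m 0 lam := by
  have hr0 : 0 ≤ 1 - lam := by linarith
  have heig (x : List (Fin m)) :
      -lapB m 0 (fun y => (1 - lam) ^ y.length) x = lam * (1 - lam) ^ x.length := by
    rw [lapB_zero_pow_length (by omega)]
    ring
  have hbd : ZeroOnBoundary m (fun y : List (Fin m) => (1 - lam) ^ y.length) :=
    zeroOnBoundary_comp_length (tendsto_pow_atTop_nhds_zero_of_lt_one hr0 (by linarith))
  refine ⟨heig, hbd, hl, _, ⟨1, fun x => ?_⟩, fun x => pow_nonneg hr0 _, ?_, heig, hbd⟩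
  · rw [abs_of_nonneg (pow_nonneg hr0 _)]
    exact pow_le_one₀ hr0 (by linarith)
  · intro h
    simpa using congrFun h []
end

section
/- Maximum principle: let β ∈ [0,1) and u : T_m → ℝ satisfy -Δ_β u(x) ≥ 0 for all x ∈ T_m and liminf_{n→∞} u(x_n) ≥ 0 along every branch {x_n} of T_m. Then u(x) ≥ 0 for all x ∈ T_m. -/
open Filter Finset Topology

/-! If `u(x₀) < 0`, then by induction on the level some vertex `x` with `u x < 0` is the root
or satisfies `u x ≤ u x̂`. At such a vertex superharmonicity bounds the mean of `u` over the
successors by `u x`, so some successor `y` has `u y ≤ u x`, and `y` again satisfies `u y ≤ u ŷ`.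
Iterating gives a path from `x` along which `u ≤ u x < 0`; completed by the ancestors of `x` it is
a branch that violates the boundary condition. -/

lemma pB_pos {β : ℝ} (hβ0 : 0 ≤ β) (hβ1 : β < 1) : 0 < pB β := by
  unfold pB
  split_ifs with h
  · exact one_pos
  · exact div_pos (lt_of_le_of_ne hβ0 (Ne.symm h)) (by linarith)

lemma exists_seq_of_forall_exists {α : Type*} {P : α → Prop} {R : α → α → Prop}
    (h : ∀ x, P x → ∃ y, P y ∧ R x y) {x₀ : α} (hx₀ : P x₀) :
    ∃ c : ℕ → α, c 0 = x₀ ∧ ∀ n, R (c n) (c (n + 1)) := by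
  choose! f hfP hfR using h
  have hP : ∀ n, P (f^[n] x₀) := fun n => by
    induction n with
    | zero => exact hx₀
    | succ n ih => rw [Function.iterate_succ_apply']; exact hfP _ ih
  refine ⟨fun n => f^[n] x₀, rfl, fun n => ?_⟩
  simpa only [Function.iterate_succ_apply'] using hfR _ (hP n)

def IsPath (m : ℕ) (c : ℕ → List (Fin m)) : Prop :=
  ∀ n, ∃ i : Fin m, c (n + 1) = i :: c n

namespace IsPath

variable {m : ℕ} {c : ℕ → List (Fin m)}

lemma length_eq (hc : IsPath m c) (n : ℕ) : (c n).length = (c 0).length + n := by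
  induction n with
  | zero => rfl
  | succ n ih => obtain ⟨i, hi⟩ := hc n; simp [hi, ih, Nat.add_assoc]

lemma drop_add (hc : IsPath m c) (n k : ℕ) : (c (n + k)).drop k = c n := by
  induction k with
  | zero => rfl
  | succ k ih => obtain ⟨i, hi⟩ := hc (n + k); rw [← Nat.add_assoc, hi, List.drop_succ_cons, ih]

/-- `(c n).drop |c 0|` is the ancestor of `c n` at level `n`: an ancestor of `c 0` for `n ≤ |c 0|`,
and `c (n - |c 0|)` afterwards. -/
lemma isBranch_drop (hc : IsPath m c) : IsBranch m (fun n => (c n).drop (c 0).length) := by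
  refine ⟨List.drop_length, fun n => ?_⟩
  obtain ⟨j, hj⟩ := hc n
  have hlt : (c 0).length < (j :: c n).length := by simp [hc.length_eq n]
  refine ⟨(j :: c n)[(c 0).length], ?_⟩
  simp only [hj, List.drop_eq_getElem_cons hlt, List.drop_succ_cons]

end IsPath

def LeParent {m : ℕ} (u : List (Fin m) → ℝ) (x : List (Fin m)) : Prop :=
  x = [] ∨ u x ≤ u x.tail

section Superharmonic

variable {m : ℕ} {β : ℝ} {u : List (Fin m) → ℝ}

lemma sum_succ_le_of_leParent (hβ0 : 0 ≤ β) (hβ1 : β < 1) {x : List (Fin m)}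
    (hsuper : 0 ≤ -lapB m β u x) (hx : LeParent u x) :
    ∑ i, u (i :: x) ≤ m * u x := by
  obtain rfl | hm := m.eq_zero_or_pos
  · simp
  rw [← div_le_iff₀' (by exact_mod_cast hm)]
  rcases x with _ | ⟨a, t⟩
  · simp only [lapB] at hsuper
    linarith
  · have hp : 0 < pB β ^ (-((a :: t).length : ℤ)) := zpow_pos (pB_pos hβ0 hβ1) _
    simp only [lapB, neg_nonneg] at hsuper
    have hmean := nonpos_of_mul_nonpos_left hsuper hp
    have hparent : u (a :: t) ≤ u t := hx.resolve_left (List.cons_ne_nil a t)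
    rw [mul_div_assoc] at hmean
    refine le_of_mul_le_mul_left ?_ (sub_pos.2 hβ1)
    linarith [mul_nonneg hβ0 (sub_nonneg.2 hparent)]

lemma exists_succ_le_of_leParent (hm : 0 < m) (hβ0 : 0 ≤ β) (hβ1 : β < 1) {x : List (Fin m)}
    (hsuper : 0 ≤ -lapB m β u x) (hx : LeParent u x) :
    ∃ i, LeParent u (i :: x) ∧ u (i :: x) ≤ u x := by
  have hsum : ∑ i, u (i :: x) ≤ ∑ _i : Fin m, u x := by
    simpa using sum_succ_le_of_leParent hβ0 hβ1 hsuper hx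
  obtain ⟨i, -, hi⟩ := exists_le_of_sum_le (univ_nonempty_iff.2 ⟨⟨0, hm⟩⟩) hsum
  exact ⟨i, Or.inr hi, hi⟩

lemma nonneg_of_leParent (hm : 0 < m) (hβ0 : 0 ≤ β) (hβ1 : β < 1)
    (hsuper : ∀ x, 0 ≤ -lapB m β u x)
    (hbdry : ∀ b : ℕ → List (Fin m), IsBranch m b →
      ∀ ε > (0 : ℝ), ∀ᶠ n in atTop, -ε ≤ u (b n))
    {x : List (Fin m)} (hx : LeParent u x) : 0 ≤ u x := by
  by_contra! hneg
  have hstep : ∀ y, LeParent u y → ∃ z, LeParent u z ∧ (∃ i, z = i :: y) ∧ u z ≤ u y := by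
    intro y hy
    obtain ⟨i, hi, hle⟩ := exists_succ_le_of_leParent hm hβ0 hβ1 (hsuper y) hy
    exact ⟨i :: y, hi, ⟨i, rfl⟩, hle⟩
  obtain ⟨c, rfl, hc⟩ := exists_seq_of_forall_exists hstep hx
  have hpath : IsPath m c := fun n => (hc n).1
  have hanti : Antitone (u ∘ c) := antitone_nat_of_succ_le fun n => (hc n).2
  obtain ⟨N, hN⟩ := eventually_atTop.1
    (hbdry _ hpath.isBranch_drop (-u (c 0) / 2) (by linarith))
  have hfar := hN (N + (c 0).length) (Nat.le_add_right _ _)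
  rw [hpath.drop_add] at hfar
  have hdesc : u (c N) ≤ u (c 0) := hanti (Nat.zero_le N)
  linarith

end Superharmonic

theorem stmt2 (m : ℕ) (hm : 2 ≤ m) (β : ℝ) (hβ0 : 0 ≤ β) (hβ1 : β < 1)
    (u : List (Fin m) → ℝ)
    (hsuper : ∀ x, 0 ≤ -lapB m β u x)
    (hbdry : ∀ b : ℕ → List (Fin m), IsBranch m b →
      ∀ ε > (0 : ℝ), ∀ᶠ n in atTop, -ε ≤ u (b n)) :
    ∀ x, 0 ≤ u x := by
  have hnonneg : ∀ x, LeParent u x → 0 ≤ u x := fun _ =>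
    nonneg_of_leParent (by omega) hβ0 hβ1 hsuper hbdry
  intro x
  induction x with
  | nil => exact hnonneg _ (Or.inl rfl)
  | cons a t ih =>
    rcases le_total (u (a :: t)) (u t) with h | h
    · exact hnonneg _ (Or.inr h)
    · exact ih.trans h
end

section
/- Every eigenvalue is positive: let β ∈ [0,1) and suppose λ ∈ ℝ admits a bounded function u : T_m → ℝ, u ≢ 0, with -Δ_β u = λ u on T_m and u(x_n) → 0 along every branch. Then λ > 0. -/
open Filter Finset Topology

lemma exists_ge_of_sum {m : ℕ} (hm : 2 ≤ m) (f : Fin m → ℝ) (c : ℝ)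
    (h : (m : ℝ) * c ≤ ∑ i : Fin m, f i) : ∃ i, c ≤ f i := by
  by_contra hcon
  push_neg at hcon
  haveI : Nonempty (Fin m) := ⟨⟨0, by omega⟩⟩
  have h2 : ∑ i : Fin m, f i < ∑ _i : Fin m, c :=
    Finset.sum_lt_sum_of_nonempty Finset.univ_nonempty (fun i _ => hcon i)
  rw [Finset.sum_const, Finset.card_univ, Fintype.card_fin, nsmul_eq_mul] at h2
  linarith

lemma lapB_neg (m : ℕ) (β : ℝ) (u : List (Fin m) → ℝ) (x : List (Fin m)) :
    lapB m β (fun y => -u y) x = -lapB m β u x := by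
  cases x with
  | nil =>
    show (∑ i : Fin m, -u [i]) / m - (-u []) = -((∑ i : Fin m, u [i]) / m - u [])
    rw [Finset.sum_neg_distrib]; ring
  | cons a t =>
    show (β * (-u t) + (1 - β) * (∑ i : Fin m, -u (i :: a :: t)) / m - (-u (a :: t))) *
        pB β ^ (-((a :: t).length : ℤ)) =
      -((β * u t + (1 - β) * (∑ i : Fin m, u (i :: a :: t)) / m - u (a :: t)) *
        pB β ^ (-((a :: t).length : ℤ)))
    rw [Finset.sum_neg_distrib]; ring

lemma core (m : ℕ) (hm : 2 ≤ m) (β : ℝ) (hβ0 : 0 ≤ β) (hβ1 : β < 1)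
    (lam : ℝ) (hlam : lam ≤ 0) (u : List (Fin m) → ℝ)
    (heig : ∀ x, -lapB m β u x = lam * u x)
    (hbdry : ZeroOnBoundary m u) (x : List (Fin m)) (hx : 0 < u x) : False := by
  have hm0 : (0 : ℝ) < m := by positivity
  -- step lemma at non-root vertices
  have hstep : ∀ (a : Fin m) (t : List (Fin m)), 0 < u (a :: t) → u t ≤ u (a :: t) →
      ∃ i : Fin m, u (a :: t) ≤ u (i :: a :: t) := by
    intro a t hpos hle
    have h := heig (a :: t)
    have hl : lapB m β u (a :: t) = -(lam * u (a :: t)) := by linarith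
    have hpow : (0 : ℝ) < pB β ^ (-(((a :: t).length : ℕ) : ℤ)) :=
      zpow_pos (pB_pos hβ0 hβ1) _
    have hE : 0 ≤ β * u t + (1 - β) * (∑ i : Fin m, u (i :: a :: t)) / m - u (a :: t) := by
      have hnn : 0 ≤ lapB m β u (a :: t) := by
        rw [hl]; nlinarith
      have : lapB m β u (a :: t) =
          (β * u t + (1 - β) * (∑ i : Fin m, u (i :: a :: t)) / m - u (a :: t)) *
            pB β ^ (-(((a :: t).length : ℕ) : ℤ)) := rfl
      nlinarith [this ▸ hnn]
    have hβm : β * u t ≤ β * u (a :: t) := mul_le_mul_of_nonneg_left hle hβ0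
    have hsum : (m : ℝ) * u (a :: t) ≤ ∑ i : Fin m, u (i :: a :: t) := by
      have h1 : (1 - β) * u (a :: t) ≤ (1 - β) * ((∑ i : Fin m, u (i :: a :: t)) / m) := by
        have := hE
        have h2 : (1 - β) * (∑ i : Fin m, u (i :: a :: t)) / m
            = (1 - β) * ((∑ i : Fin m, u (i :: a :: t)) / m) := by ring
        nlinarith
      have h3 : u (a :: t) ≤ (∑ i : Fin m, u (i :: a :: t)) / m :=
        le_of_mul_le_mul_left (by linarith) (by linarith : (0:ℝ) < 1 - β)
      calc (m : ℝ) * u (a :: t) ≤ m * ((∑ i : Fin m, u (i :: a :: t)) / m) :=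
            mul_le_mul_of_nonneg_left h3 (le_of_lt hm0)
        _ = ∑ i : Fin m, u (i :: a :: t) := by field_simp
    exact exists_ge_of_sum hm _ _ hsum
  -- branch construction: a non-root vertex dominating its parent yields a contradiction
  have hbranch : ∀ (a : Fin m) (t : List (Fin m)), 0 < u (a :: t) → u t ≤ u (a :: t) → False := by
    intro a t hpos hle
    classical
    set x₀ : List (Fin m) := a :: t with hx₀
    set k : ℕ := x₀.length with hk
    let f : List (Fin m) → List (Fin m) := fun y =>
      if h : ∃ i : Fin m, u y ≤ u (i :: y) then h.choose :: y else y
    let z : ℕ → List (Fin m) := fun n => f^[n] x₀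
    have hz0 : z 0 = x₀ := rfl
    have hzsucc : ∀ n, z (n + 1) = f (z n) := by
      intro n
      show f^[n+1] x₀ = f (f^[n] x₀)
      rw [Function.iterate_succ_apply']
    -- invariant
    have hQ : ∀ n, ∃ (b : Fin m) (s : List (Fin m)),
        z n = b :: s ∧ u s ≤ u (z n) ∧ u x₀ ≤ u (z n) := by
      intro n
      induction n with
      | zero => exact ⟨a, t, rfl, hle, le_refl _⟩
      | succ n ih =>
        obtain ⟨b, s, hbs, hs, hx0⟩ := ih
        have hpos' : 0 < u (z n) := lt_of_lt_of_le hpos hx0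
        have hex : ∃ i : Fin m, u (z n) ≤ u (i :: z n) := by
          have := hstep b s (hbs ▸ hpos') (hbs ▸ hs)
          rw [← hbs] at this
          exact this
        have hzn1 : z (n + 1) = hex.choose :: z n := by
          rw [hzsucc]; simp only [f]; rw [dif_pos hex]
        refine ⟨hex.choose, z n, hzn1, ?_, ?_⟩
        · rw [hzn1]; exact hex.choose_spec
        · rw [hzn1]; exact le_trans hx0 hex.choose_spec
    have hcons : ∀ n, ∃ i : Fin m, z (n + 1) = i :: z n := by
      intro n
      obtain ⟨b, s, hbs, hs, hx0⟩ := hQ n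
      have hpos' : 0 < u (z n) := lt_of_lt_of_le hpos hx0
      have hex : ∃ i : Fin m, u (z n) ≤ u (i :: z n) := by
        have := hstep b s (hbs ▸ hpos') (hbs ▸ hs)
        rw [← hbs] at this
        exact this
      refine ⟨hex.choose, ?_⟩
      rw [hzsucc]; simp only [f]; rw [dif_pos hex]
    -- the branch
    let b : ℕ → List (Fin m) := fun n => if n ≤ k then x₀.drop (k - n) else z (n - k)
    have hble : ∀ n, n ≤ k → b n = x₀.drop (k - n) := by
      intro n hn
      simp only [b, if_pos hn]
    have hbk : ∀ n, k < n → b n = z (n - k) := by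
      intro n hn
      have h' : ¬ n ≤ k := by omega
      simp only [b, if_neg h']
    have hb0 : b 0 = [] := by
      rw [hble 0 (Nat.zero_le k), Nat.sub_zero, hk, List.drop_length]
    have hbranchprop : IsBranch m b := by
      refine ⟨hb0, ?_⟩
      intro n
      rcases lt_trichotomy n k with hn | hn | hn
      · have hlt : k - n - 1 < x₀.length := by omega
        refine ⟨x₀[k - n - 1], ?_⟩
        rw [hble (n + 1) (by omega), hble n (by omega),
          show k - (n + 1) = k - n - 1 by omega, List.drop_eq_getElem_cons hlt]
        congr 2
        omega
      · obtain ⟨i, hi⟩ := hcons 0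
        refine ⟨i, ?_⟩
        have e2 : b n = x₀ := by
          rw [hble n (by omega), show k - n = 0 by omega, List.drop_zero]
        have e3 : b (n + 1) = z 1 := by
          rw [hbk (n + 1) (by omega)]
          congr 1
          omega
        rw [e3, e2, hi, hz0]
      · obtain ⟨i, hi⟩ := hcons (n - k)
        refine ⟨i, ?_⟩
        rw [hbk n hn, hbk (n + 1) (by omega), show n + 1 - k = (n - k) + 1 by omega, hi]
    have htend := hbdry b hbranchprop
    have hev : ∀ᶠ n in atTop, u (b n) < u x₀ :=
      htend.eventually (eventually_lt_nhds hpos)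
    obtain ⟨N, hN⟩ := eventually_atTop.mp hev
    have hcontra := hN (max N (k + 1)) (le_max_left _ _)
    have hgt : k < max N (k + 1) := by omega
    rw [hbk _ hgt] at hcontra
    obtain ⟨_, _, _, _, hx0⟩ := hQ (max N (k + 1) - k)
    linarith
  -- main induction
  have main : ∀ y : List (Fin m), 0 < u y → False := by
    intro y
    induction y with
    | nil =>
      intro h
      have heq := heig []
      have hl : lapB m β u [] = -(lam * u []) := by linarith
      have hroot : (∑ i : Fin m, u [i]) / m - u [] = -(lam * u []) := hl
      have hsum : (m : ℝ) * u [] ≤ ∑ i : Fin m, u [i] := by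
        have : 0 ≤ (∑ i : Fin m, u [i]) / m - u [] := by rw [hroot]; nlinarith
        have h2 : u [] ≤ (∑ i : Fin m, u [i]) / m := by linarith
        calc (m : ℝ) * u [] ≤ m * ((∑ i : Fin m, u [i]) / m) :=
              mul_le_mul_of_nonneg_left h2 (le_of_lt hm0)
          _ = ∑ i : Fin m, u [i] := by field_simp
      obtain ⟨i, hi⟩ := exists_ge_of_sum hm _ _ hsum
      exact hbranch i [] (lt_of_lt_of_le h hi) hi
    | cons a t ih =>
      intro h
      rcases le_or_gt (u t) (u (a :: t)) with h' | h'
      · exact hbranch a t h h'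
      · exact ih (h.trans h')
  exact main x hx

theorem stmt4 (m : ℕ) (hm : 2 ≤ m) (β : ℝ) (hβ0 : 0 ≤ β) (hβ1 : β < 1)
    (lam : ℝ) (u : List (Fin m) → ℝ)
    (hbdd : ∃ M, ∀ x, |u x| ≤ M) (hne : u ≠ 0)
    (heig : ∀ x, -lapB m β u x = lam * u x)
    (hbdry : ZeroOnBoundary m u) : 0 < lam := by
  by_contra hl
  push_neg at hl
  obtain ⟨x, hx⟩ := Function.ne_iff.mp hne
  rcases lt_trichotomy (u x) 0 with h | h | h
  · have heig' : ∀ y, -lapB m β (fun z => -u z) y = lam * (-u y) := by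
      intro y
      rw [lapB_neg, neg_neg]
      have := heig y
      linarith
    have hbdry' : ZeroOnBoundary m (fun z => -u z) := by
      intro b hb
      have := (hbdry b hb).neg
      simpa using this
    exact absurd (core m hm β hβ0 hβ1 lam hl (fun z => -u z) heig' hbdry' x (by simpa using h)) id
  · exact hx (by simpa using h)
  · exact absurd (core m hm β hβ0 hβ1 lam hl u heig hbdry x h) id
end

section
/- Every principal eigenvalue satisfies λ ≤ 1; moreover, if β ∈ (0,1/2], then λ < 1. -/
open Filter Finset Topology

lemma eq_zero_of_sum_div_eq_zero {m : ℕ} {f : Fin m → ℝ} (hf : ∀ i, 0 ≤ f i)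
    (h : (∑ i, f i) / m = 0) (i : Fin m) : f i = 0 := by
  have hm : (m : ℝ) ≠ 0 := by have := i.pos; positivity
  have hsum : ∑ j, f j = 0 := (div_eq_zero_iff.mp h).resolve_right hm
  exact (sum_eq_zero_iff_of_nonneg fun j _ => hf j).mp hsum i (mem_univ i)

section Eigenfunction

variable {m : ℕ} {β lam : ℝ} {u : List (Fin m) → ℝ}

lemma mean_children_root_eq (heq : ∀ x, -lapB m β u x = lam * u x) :
    (∑ i, u [i]) / m = (1 - lam) * u [] := by
  have h := heq []
  simp only [lapB] at h
  linarith

lemma parent_add_mean_children_eq_zero (hβ0 : 0 ≤ β) (hβ1 : β < 1)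
    (heq : ∀ x, -lapB m β u x = lam * u x) {a : Fin m} {t : List (Fin m)} (hx : u (a :: t) = 0) :
    β * u t + (1 - β) * (∑ i, u (i :: a :: t)) / m = 0 := by
  have h := heq (a :: t)
  rw [lapB, hx, mul_zero, neg_eq_zero, sub_zero] at h
  exact (mul_eq_zero.mp h).resolve_right (zpow_ne_zero _ (pB_pos hβ0 hβ1).ne')

lemma children_eq_zero_of_eq_zero (hu : ∀ x, 0 ≤ u x) (hβ0 : 0 ≤ β) (hβ1 : β < 1)
    (heq : ∀ x, -lapB m β u x = lam * u x) {a : Fin m} {t : List (Fin m)} (hx : u (a :: t) = 0)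
    (i : Fin m) : u (i :: a :: t) = 0 := by
  have hzero := parent_add_mean_children_eq_zero hβ0 hβ1 heq hx
  have hparent : 0 ≤ β * u t := mul_nonneg hβ0 (hu t)
  have hchildren : 0 ≤ (1 - β) * (∑ j, u (j :: a :: t)) / m :=
    div_nonneg (mul_nonneg (by linarith) (sum_nonneg fun j _ => hu _)) m.cast_nonneg
  have hmean : (1 - β) * ((∑ j, u (j :: a :: t)) / m) = 0 := by
    rw [← mul_div_assoc]
    linarith
  exact eq_zero_of_sum_div_eq_zero (f := fun j => u (j :: a :: t)) (fun j => hu _)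
    ((mul_eq_zero.mp hmean).resolve_left (by linarith)) i

lemma eq_zero_of_root_eq_zero (hu : ∀ x, 0 ≤ u x) (hβ0 : 0 ≤ β) (hβ1 : β < 1)
    (heq : ∀ x, -lapB m β u x = lam * u x) (h0 : u [] = 0) : ∀ x, u x = 0
  | [] => h0
  | [a] => eq_zero_of_sum_div_eq_zero (f := fun j => u [j]) (fun j => hu _)
      (by rw [mean_children_root_eq heq, h0, mul_zero]) a
  | a :: b :: t => children_eq_zero_of_eq_zero hu hβ0 hβ1 heq
      (eq_zero_of_root_eq_zero hu hβ0 hβ1 heq h0 (b :: t)) a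

lemma root_pos (hu : ∀ x, 0 ≤ u x) (hne : u ≠ 0) (hβ0 : 0 ≤ β) (hβ1 : β < 1)
    (heq : ∀ x, -lapB m β u x = lam * u x) : 0 < u [] :=
  (hu []).lt_of_ne' fun h0 => hne (funext (eq_zero_of_root_eq_zero hu hβ0 hβ1 heq h0))

lemma eigenvalue_le_one (hu : ∀ x, 0 ≤ u x) (hne : u ≠ 0) (hβ0 : 0 ≤ β) (hβ1 : β < 1)
    (heq : ∀ x, -lapB m β u x = lam * u x) : lam ≤ 1 := by
  have hmean : 0 ≤ (1 - lam) * u [] := mean_children_root_eq heq ▸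
    div_nonneg (sum_nonneg fun i _ => hu _) m.cast_nonneg
  exact sub_nonneg.mp (nonneg_of_mul_nonneg_left hmean (root_pos hu hne hβ0 hβ1 heq))

lemma eigenvalue_lt_one (hm : 0 < m) (hu : ∀ x, 0 ≤ u x) (hne : u ≠ 0) (hβ : 0 < β)
    (hβ1 : β < 1) (heq : ∀ x, -lapB m β u x = lam * u x) : lam < 1 := by
  refine (eigenvalue_le_one hu hne hβ.le hβ1 heq).lt_of_ne fun hlam => ?_
  have hroot : (∑ i, u [i]) / m = 0 := by
    rw [mean_children_root_eq heq, hlam, sub_self, zero_mul]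
  have hchild := eq_zero_of_sum_div_eq_zero (f := fun j => u [j]) (fun j => hu _) hroot ⟨0, hm⟩
  have hzero := parent_add_mean_children_eq_zero hβ.le hβ1 heq hchild
  have hgrandchildren : 0 ≤ (1 - β) * (∑ j, u [j, ⟨0, hm⟩]) / m :=
    div_nonneg (mul_nonneg (by linarith) (sum_nonneg fun j _ => hu _)) m.cast_nonneg
  have hparent : 0 < β * u [] := mul_pos hβ (root_pos hu hne hβ.le hβ1 heq)
  linarith

end Eigenfunction

theorem stmt5 (m : ℕ) (hm : 2 ≤ m) (β : ℝ) (hβ0 : 0 ≤ β) (hβ1 : β < 1)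
    (lam : ℝ) (h : IsPrincipalEigenvalue m β lam) :
    lam ≤ 1 ∧ (0 < β → β ≤ 1 / 2 → lam < 1) := by
  obtain ⟨-, u, -, hu, hne, heq, -⟩ := h
  exact ⟨eigenvalue_le_one hu hne hβ0 hβ1 heq,
    fun hβ _ => eigenvalue_lt_one (by omega) hu hne hβ hβ1 heq⟩
end

section
/- Monotonicity of level averages: let β ∈ (0,1), λ > 0, and let ū : T_m → ℝ be nonnegative, constant on each level (ū(x) = g(|x|) for some g : ℕ → ℝ), and satisfy Δ_β ū(x) + λ ū(x) ≤ 0 for all x ∈ T_m. Then g is non-increasing: g(k+1) ≤ g(k) for all k ≥ 0. -/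
open Filter Finset Topology

lemma average_const (m : ℕ) (hm : m ≠ 0) (c : ℝ) : (∑ _i : Fin m, c) / m = c := by
  rw [Fin.sum_const, nsmul_eq_mul]
  field_simp

section LevelConstant

variable {m : ℕ} (β : ℝ) (g : ℕ → ℝ)

lemma lapB_comp_length_nil (hm : m ≠ 0) :
    lapB m β (fun y => g y.length) [] = g 1 - g 0 := by
  simp only [lapB, List.length_cons, List.length_nil, zero_add, average_const m hm]

lemma lapB_comp_length_cons (hm : m ≠ 0) (a : Fin m) (t : List (Fin m)) :
    lapB m β (fun y => g y.length) (a :: t) =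
      (β * (g t.length - g (t.length + 1)) + (1 - β) * (g (t.length + 2) - g (t.length + 1))) *
        pB β ^ (-((t.length + 1 : ℕ) : ℤ)) := by
  simp only [lapB, List.length_cons, mul_div_assoc, average_const m hm]
  ring

end LevelConstant

lemma succ_le_of_weighted_second_difference_nonpos {β : ℝ} (hβ0 : 0 ≤ β) (hβ1 : β < 1)
    {g : ℕ → ℝ} (h₀ : g 1 ≤ g 0)
    (hstep : ∀ k, β * (g k - g (k + 1)) + (1 - β) * (g (k + 2) - g (k + 1)) ≤ 0) :
    ∀ k, g (k + 1) ≤ g k := by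
  intro k
  induction k with
  | zero => exact h₀
  | succ k ih =>
    have hβ_term : 0 ≤ β * (g k - g (k + 1)) := mul_nonneg hβ0 (by linarith)
    have hdiff : (1 - β) * (g (k + 2) - g (k + 1)) ≤ 0 := by linarith [hstep k]
    linarith [nonpos_of_mul_nonpos_right hdiff (by linarith : (0 : ℝ) < 1 - β)]

theorem stmt7 (m : ℕ) (hm : 2 ≤ m) (β : ℝ) (hβ0 : 0 < β) (hβ1 : β < 1)
    (lam : ℝ) (hl : 0 < lam) (g : ℕ → ℝ) (hg : ∀ k, 0 ≤ g k)
    (hsub : ∀ x : List (Fin m),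
      lapB m β (fun y => g y.length) x + lam * g x.length ≤ 0) :
    ∀ k : ℕ, g (k + 1) ≤ g k := by
  have hm0 : m ≠ 0 := by omega
  have hreaction (n : ℕ) : 0 ≤ lam * g n := mul_nonneg hl.le (hg n)
  refine succ_le_of_weighted_second_difference_nonpos hβ0.le hβ1 ?_ fun k => ?_
  · have hroot := hsub []
    rw [lapB_comp_length_nil β g hm0, List.length_nil] at hroot
    linarith [hreaction 0]
  · have hlevel := hsub (⟨0, by omega⟩ :: List.replicate k ⟨0, by omega⟩)
    rw [lapB_comp_length_cons β g hm0, List.length_cons, List.length_replicate] at hlevel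
    exact nonpos_of_mul_nonpos_left (by linarith [hreaction (k + 1)])
      (zpow_pos (pB_pos hβ0.le hβ1) (-((k + 1 : ℕ) : ℤ)))
end

section
/- No principal eigenvalue for β > 1/2: let β ∈ (1/2,1). Then there is no λ > 0 admitting a bounded nonnegative u ≢ 0 with -Δ_β u = λ u on T_m and u → 0 along every branch. -/
open Filter Finset Topology

/- On a non-root vertex `x` the eigenvalue equation reads
`(1 - λ p_β^{|x|}) u(x) = β u(x̂) + ((1-β)/m) Σᵢ u(x,i)`, and the right-hand side is `≥ 0`.
For `β > 1/2` we have `p_β > 1`, so the factor `1 - λ p_β^{|x|}` is negative at all deep levels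
and forces `u = 0` there. Going back up, the same identity at a vertex where `u` vanishes is
a sum of two nonnegative terms equal to `0`, so `u` also vanishes at the parent; hence `u ≡ 0`. -/

lemma one_lt_pB {β : ℝ} (hβ0 : 1 / 2 < β) (hβ1 : β < 1) : 1 < pB β := by
  rw [pB, if_neg (by linarith), lt_div_iff₀ (by linarith)]
  linarith

section Eigenfunction

variable {m : ℕ} {β lam : ℝ} {u : List (Fin m) → ℝ}

lemma neg_lapB_cons_eq_mul_iff (hp : pB β ≠ 0) (a : Fin m) (t : List (Fin m)) :
    -lapB m β u (a :: t) = lam * u (a :: t) ↔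
      β * u t + (1 - β) * (∑ i : Fin m, u (i :: a :: t)) / m =
        (1 - lam * pB β ^ (t.length + 1)) * u (a :: t) := by
  have hpow : pB β ^ (t.length + 1) ≠ 0 := pow_ne_zero _ hp
  rw [lapB, List.length_cons, zpow_neg, zpow_natCast, neg_mul_eq_neg_mul,
    ← eq_div_iff (inv_ne_zero hpow), div_inv_eq_mul]
  constructor <;> intro h <;> linarith

lemma neighbour_mean_nonneg (hβ0 : 0 ≤ β) (hβ1 : β ≤ 1) (hu : ∀ x, 0 ≤ u x)
    (a : Fin m) (t : List (Fin m)) :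
    0 ≤ β * u t + (1 - β) * (∑ i : Fin m, u (i :: a :: t)) / m := by
  have := hu t
  have : 0 ≤ ∑ i : Fin m, u (i :: a :: t) := sum_nonneg fun i _ => hu _
  have : 0 ≤ 1 - β := by linarith
  positivity

lemma eq_zero_of_one_lt_mul_pB_pow (hβ0 : 0 ≤ β) (hβ1 : β ≤ 1) (hu : ∀ x, 0 ≤ u x)
    (heig : ∀ x, -lapB m β u x = lam * u x) {a : Fin m} {t : List (Fin m)}
    (hdeep : 1 < lam * pB β ^ (t.length + 1)) : u (a :: t) = 0 := by
  have hp : pB β ≠ 0 := by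
    intro h
    rw [h, zero_pow (Nat.succ_ne_zero _), mul_zero] at hdeep
    linarith
  have h := (neg_lapB_cons_eq_mul_iff hp a t).1 (heig (a :: t))
  have := neighbour_mean_nonneg hβ0 hβ1 hu a t
  have := hu (a :: t)
  nlinarith

lemma eq_zero_of_cons_eq_zero (hβ0 : 0 < β) (hβ1 : β ≤ 1) (hu : ∀ x, 0 ≤ u x)
    (heig : ∀ x, -lapB m β u x = lam * u x) (hp : pB β ≠ 0) {a : Fin m} {t : List (Fin m)}
    (hat : u (a :: t) = 0) : u t = 0 := by
  have h := (neg_lapB_cons_eq_mul_iff hp a t).1 (heig (a :: t))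
  rw [hat, mul_zero] at h
  have : 0 ≤ (1 - β) * (∑ i : Fin m, u (i :: a :: t)) / m := by
    have : 0 ≤ ∑ i : Fin m, u (i :: a :: t) := sum_nonneg fun i _ => hu _
    have : 0 ≤ 1 - β := by linarith
    positivity
  have := hu t
  nlinarith

lemma eq_zero_of_append_eq_zero (hβ0 : 0 < β) (hβ1 : β ≤ 1) (hu : ∀ x, 0 ≤ u x)
    (heig : ∀ x, -lapB m β u x = lam * u x) (hp : pB β ≠ 0) {x : List (Fin m)} :
    ∀ l : List (Fin m), u (l ++ x) = 0 → u x = 0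
  | [], h => h
  | _ :: l, h => eq_zero_of_append_eq_zero hβ0 hβ1 hu heig hp l
      (eq_zero_of_cons_eq_zero hβ0 hβ1 hu heig hp h)

end Eigenfunction

theorem stmt8 (m : ℕ) (hm : 2 ≤ m) (β : ℝ) (hβ0 : 1 / 2 < β) (hβ1 : β < 1) :
    ¬ ∃ lam : ℝ, IsPrincipalEigenvalue m β lam := by
  rintro ⟨lam, hlam, u, -, hu, hne, heig, -⟩
  have hp := one_lt_pB hβ0 hβ1
  have hβpos : 0 < β := by linarith
  obtain ⟨N, hN⟩ := pow_unbounded_of_one_lt lam⁻¹ hp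
  apply hne
  funext x
  let a : Fin m := ⟨0, by omega⟩
  refine eq_zero_of_append_eq_zero hβpos hβ1.le hu heig (by positivity) (a :: .replicate N a) ?_
  refine eq_zero_of_one_lt_mul_pB_pow hβpos.le hβ1.le hu heig ?_
  calc 1 = lam * lam⁻¹ := (mul_inv_cancel₀ hlam.ne').symm
    _ < lam * pB β ^ N := by gcongr
    _ ≤ lam * pB β ^ ((List.replicate N a ++ x).length + 1) := by
      gcongr
      · exact hp.le
      · simp only [List.length_append, List.length_replicate]; omega
end

section
/- Monotonicity of the principal eigenvalue in β: if 0 < γ < β < 1/2, then A_β ⊆ A_γ; consequently λ₁(γ) ≥ λ₁(β), i.e., β ↦ λ₁(β) = sup A_β is non-increasing on (0,1/2). -/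
open Filter Finset Topology

/-!
Averaging a bounded positive supersolution `v` of `Δ_β v + λ v ≤ 0` over the levels of the tree
gives a radial supersolution `f (|x|)`, because the weight `p_β^{-|x|}` is constant on each level.
The one-dimensional inequalities force `f` to be strictly decreasing. For a decreasing `f` with
nonpositive bracket `β f(n) + (1-β) f(n+2) - f(n+1)`, replacing `β` by `γ < β` lowers the bracket
and raises the weight `p^{-(n+1)}`, so `Δ_γ f ≤ Δ_β f ≤ -λ f`. Finally `A_γ ⊆ (0, 1]` (look at the
root), so the suprema compare.
-/

open scoped BigOperators

lemma pB_pos_s12 {β : ℝ} (h0 : 0 ≤ β) (h1 : β < 1) : 0 < pB β := by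
  unfold pB
  split_ifs with hβ
  · exact one_pos
  · exact div_pos (lt_of_le_of_ne h0 (Ne.symm hβ)) (by linarith)

lemma pB_le_pB {γ β : ℝ} (hγ : 0 < γ) (hγβ : γ ≤ β) (hβ : β < 1) : pB γ ≤ pB β := by
  rw [pB, pB, if_neg hγ.ne', if_neg (hγ.trans_le hγβ).ne',
    div_le_div_iff₀ (by linarith) (by linarith)]
  nlinarith

section levelAvg

variable {m : ℕ}

noncomputable def levelAvg (u : List (Fin m) → ℝ) (k : ℕ) : ℝ :=
  𝔼 g : Fin k → Fin m, u (List.ofFn g)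

lemma sum_div_eq_expect (f : Fin m → ℝ) : (∑ i, f i) / m = 𝔼 i, f i := by
  rw [Fintype.expect_eq_sum_div_card, Fintype.card_fin]

lemma levelAvg_zero (u : List (Fin m) → ℝ) : levelAvg u 0 = u [] := by
  simp [levelAvg]

lemma levelAvg_succ (u : List (Fin m) → ℝ) (k : ℕ) :
    levelAvg u (k + 1) = levelAvg (fun x => 𝔼 i, u (i :: x)) k := by
  unfold levelAvg
  calc 𝔼 h : Fin (k + 1) → Fin m, u (List.ofFn h)
      = 𝔼 p : Fin m × (Fin k → Fin m), u (p.1 :: List.ofFn p.2) :=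
        Fintype.expect_equiv (Fin.consEquiv fun _ => Fin m).symm _ _
          fun h => by rw [List.ofFn_succ]; rfl
    _ = 𝔼 i, 𝔼 g : Fin k → Fin m, u (i :: List.ofFn g) := by
        rw [← Finset.univ_product_univ]
        exact Finset.expect_product' _ _ fun i g => u (i :: List.ofFn g)
    _ = 𝔼 g : Fin k → Fin m, 𝔼 i, u (i :: List.ofFn g) := Finset.expect_comm _ _ _

lemma levelAvg_congr {u w : List (Fin m) → ℝ} {k : ℕ}
    (h : ∀ x : List (Fin m), x.length = k → u x = w x) : levelAvg u k = levelAvg w k :=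
  Finset.expect_congr rfl fun _ _ => h _ List.length_ofFn

lemma levelAvg_nonpos {u : List (Fin m) → ℝ} {k : ℕ}
    (h : ∀ x : List (Fin m), x.length = k → u x ≤ 0) : levelAvg u k ≤ 0 :=
  (Finset.expect_le_expect (g := fun _ => 0) fun _ _ => h _ List.length_ofFn).trans_eq
    (Finset.expect_const_zero _)

variable [NeZero m]

lemma levelAvg_comp_tail (u : List (Fin m) → ℝ) (k : ℕ) :
    levelAvg (fun x => u x.tail) (k + 1) = levelAvg u k := by
  simp [levelAvg_succ]

lemma levelAvg_mem_Ioo {u : List (Fin m) → ℝ} {c C : ℝ} (h : ∀ x, u x ∈ Set.Ioo c C) (k : ℕ) :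
    levelAvg u k ∈ Set.Ioo c C :=
  ⟨Finset.lt_expect (fun _ _ => (h _).1.le) ⟨default, Finset.mem_univ _, (h _).1⟩,
    Finset.expect_lt (fun _ _ => (h _).2.le) ⟨default, Finset.mem_univ _, (h _).2⟩⟩

end levelAvg

noncomputable def lapSeq (β : ℝ) (f : ℕ → ℝ) : ℕ → ℝ
  | 0 => f 1 - f 0
  | n + 1 => (β * f n + (1 - β) * f (n + 2) - f (n + 1)) * pB β ^ (-((n + 1 : ℕ) : ℤ))

section radial

variable {m : ℕ} [NeZero m]

lemma lapB_comp_length (β : ℝ) (f : ℕ → ℝ) (x : List (Fin m)) :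
    lapB m β (fun y => f y.length) x = lapSeq β f x.length := by
  cases x <;> simp only [lapB, lapSeq, mul_div_assoc, sum_div_eq_expect, Fintype.expect_const,
    List.length_nil, List.length_cons]

lemma levelAvg_lapB (β : ℝ) (v : List (Fin m) → ℝ) (n : ℕ) :
    levelAvg (lapB m β v) n = lapSeq β (levelAvg v) n := by
  cases n with
  | zero =>
    simp only [levelAvg_zero, lapSeq, levelAvg_succ, lapB, sum_div_eq_expect]
  | succ n =>
    set q := pB β ^ (-((n + 1 : ℕ) : ℤ))
    have hlap : ∀ x : List (Fin m), x.length = n + 1 →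
        lapB m β v x = q * (β * v x.tail + (1 - β) * 𝔼 i, v (i :: x) - v x) := by
      rintro (_ | ⟨a, t⟩) hx
      · simp at hx
      · simp only [lapB, List.tail_cons, ← sum_div_eq_expect, q, ← hx]
        ring
    have hlin : levelAvg (fun x => q * (β * v x.tail + (1 - β) * 𝔼 i, v (i :: x) - v x)) (n + 1)
        = q * (β * levelAvg (fun x => v x.tail) (n + 1)
          + (1 - β) * levelAvg (fun x => 𝔼 i, v (i :: x)) (n + 1) - levelAvg v (n + 1)) := by
      simp only [levelAvg, ← Finset.mul_expect, Finset.expect_sub_distrib,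
        Finset.expect_add_distrib]
    rw [levelAvg_congr hlap, hlin, levelAvg_comp_tail, ← levelAvg_succ, lapSeq, mul_comm]

end radial

lemma strictAnti_of_lapSeq_neg {β : ℝ} {f : ℕ → ℝ} (h0 : 0 ≤ β) (h1 : β < 1)
    (h : ∀ n, lapSeq β f n < 0) : StrictAnti f := by
  refine strictAnti_nat_of_succ_lt fun n => ?_
  induction n with
  | zero => simpa [lapSeq] using h 0
  | succ k ih =>
    have hbracket : β * f k + (1 - β) * f (k + 2) - f (k + 1) < 0 :=
      neg_of_mul_neg_left (h (k + 1)) (zpow_pos (pB_pos_s12 h0 h1) _).le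
    nlinarith

lemma lapSeq_le_lapSeq {γ β : ℝ} {f : ℕ → ℝ} (hγ : 0 < γ) (hγβ : γ ≤ β) (hβ : β < 1)
    (hf : Antitone f) {n : ℕ} (h : lapSeq β f n ≤ 0) : lapSeq γ f n ≤ lapSeq β f n := by
  cases n with
  | zero => rfl
  | succ n =>
    simp only [lapSeq, zpow_neg, zpow_natCast] at h ⊢
    have hpγ : 0 < pB γ := pB_pos_s12 hγ.le (hγβ.trans_lt hβ)
    have hpβ : 0 < pB β := pB_pos_s12 (hγ.le.trans hγβ) hβ
    have hweight : (pB β ^ (n + 1))⁻¹ ≤ (pB γ ^ (n + 1))⁻¹ :=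
      inv_anti₀ (pow_pos hpγ _) (pow_le_pow_left₀ hpγ.le (pB_le_pB hγ hγβ hβ) _)
    have hbracketβ : β * f n + (1 - β) * f (n + 2) - f (n + 1) ≤ 0 :=
      nonpos_of_mul_nonpos_left h (inv_pos.2 (pow_pos hpβ _))
    have hbracket : γ * f n + (1 - γ) * f (n + 2) - f (n + 1)
        ≤ β * f n + (1 - β) * f (n + 2) - f (n + 1) := by
      nlinarith [hf (show n ≤ n + 2 by omega)]
    calc (γ * f n + (1 - γ) * f (n + 2) - f (n + 1)) * (pB γ ^ (n + 1))⁻¹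
        ≤ (β * f n + (1 - β) * f (n + 2) - f (n + 1)) * (pB γ ^ (n + 1))⁻¹ :=
          mul_le_mul_of_nonneg_right hbracket (inv_pos.2 (pow_pos hpγ _)).le
      _ ≤ (β * f n + (1 - β) * f (n + 2) - f (n + 1)) * (pB β ^ (n + 1))⁻¹ :=
          mul_le_mul_of_nonpos_left hweight hbracketβ

lemma memA_le_one {m : ℕ} {β lam : ℝ} (h : memA m β lam) : lam ≤ 1 := by
  obtain ⟨-, v, c, C, hc, hv, hsuper⟩ := h
  have hroot : (∑ i : Fin m, v [i]) / m - v [] + lam * v [] ≤ 0 := hsuper []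
  have hmean : 0 ≤ (∑ i : Fin m, v [i]) / m :=
    div_nonneg (Finset.sum_nonneg fun i _ => (hc.trans (hv _).1).le) (Nat.cast_nonneg m)
  nlinarith [hc.trans (hv []).1]

lemma memA_anti {m : ℕ} [NeZero m] {γ β lam : ℝ} (hγ : 0 < γ) (hγβ : γ ≤ β) (hβ : β < 1)
    (h : memA m β lam) : memA m γ lam := by
  obtain ⟨hlam, v, c, C, hc, hv, hsuper⟩ := h
  set f := levelAvg v
  have hf : ∀ n, f n ∈ Set.Ioo c C := levelAvg_mem_Ioo hv
  have hfsuper : ∀ n, lapSeq β f n + lam * f n ≤ 0 := fun n => by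
    have hsplit : levelAvg (fun x => lapB m β v x + lam * v x) n
        = levelAvg (lapB m β v) n + lam * f n := by
      simp only [levelAvg, f, Finset.expect_add_distrib, Finset.mul_expect]
    rw [← levelAvg_lapB, ← hsplit]
    exact levelAvg_nonpos fun x _ => hsuper x
  have hneg : ∀ n, lapSeq β f n < 0 := fun n => by
    nlinarith [hfsuper n, hc.trans (hf n).1]
  have hanti : Antitone f := (strictAnti_of_lapSeq_neg (hγ.le.trans hγβ) hβ hneg).antitone
  refine ⟨hlam, fun x => f x.length, c, C, hc, fun x => hf _, fun x => ?_⟩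
  rw [lapB_comp_length]
  linarith [lapSeq_le_lapSeq hγ hγβ hβ hanti (hneg x.length).le, hfsuper x.length]

theorem stmt12 (m : ℕ) (hm : 2 ≤ m) (γ β : ℝ)
    (hγ : 0 < γ) (hγβ : γ < β) (hβ : β < 1 / 2) :
    {lam : ℝ | memA m β lam} ⊆ {lam : ℝ | memA m γ lam} ∧
    lam1 m β ≤ lam1 m γ := by
  have : NeZero m := ⟨by omega⟩
  have hsub : {lam : ℝ | memA m β lam} ⊆ {lam : ℝ | memA m γ lam} :=
    fun _ => memA_anti hγ hγβ.le (by linarith)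
  refine ⟨hsub, ?_⟩
  rcases Set.eq_empty_or_nonempty {lam : ℝ | memA m β lam} with hempty | hne
  · rw [lam1, hempty, Real.sSup_empty]
    exact Real.sSup_nonneg fun _ h => h.1.le
  · exact csSup_le_csSup ⟨1, fun _ => memA_le_one⟩ hne hsub
end

section
/- Discrete bound derivation: let β ∈ (0,1/2), p = β/(1-β), λ ∈ (0,1), and (u_k)_{k≥0} a sequence with u_0 = 1, 0 < u_k ≤ 1 for all k, u_k → 0, satisfying λ = 1 - u_1 and λ u_k p^k = β(u_k - u_{k-1}) + (1-β)(u_k - u_{k+1}) for all k ≥ 1. Then λ Σ_{k=0}^∞ p^k u_k = 1 - 2β + β λ, and consequently (1-2β)²/(β² + (1-β)²) ≤ λ ≤ (1-2β)/(1-β). -/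
open Filter Finset Topology

theorem stmt14 (β : ℝ) (hβ0 : 0 < β) (hβ1 : β < 1 / 2)
    (lam : ℝ) (hl0 : 0 < lam) (hl1 : lam < 1)
    (u : ℕ → ℝ) (hu0 : u 0 = 1)
    (hpos : ∀ k, 0 < u k) (hle : ∀ k, u k ≤ 1)
    (hlim : Tendsto u atTop (𝓝 0))
    (h1 : lam = 1 - u 1)
    (hrec : ∀ k : ℕ, 1 ≤ k →
      lam * u k * (β / (1 - β)) ^ k
        = β * (u k - u (k - 1)) + (1 - β) * (u k - u (k + 1))) :
    lam * ∑' k : ℕ, (β / (1 - β)) ^ k * u k = 1 - 2 * β + β * lam ∧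
    (1 - 2 * β) ^ 2 / (β ^ 2 + (1 - β) ^ 2) ≤ lam ∧
    lam ≤ (1 - 2 * β) / (1 - β) := by
  set p := β / (1 - β) with hp_def
  have h1β : (0:ℝ) < 1 - β := by linarith
  have hp0 : 0 < p := div_pos hβ0 h1β
  have hp1 : p < 1 := by
    rw [hp_def, div_lt_one h1β]; linarith
  have hterm_nonneg : ∀ k, 0 ≤ p ^ k * u k :=
    fun k => mul_nonneg (pow_nonneg hp0.le k) (hpos k).le
  have hterm_le : ∀ k, p ^ k * u k ≤ p ^ k := fun k => by
    nlinarith [hle k, pow_nonneg hp0.le k, hpos k]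
  have hgeo : Summable (fun k : ℕ => p ^ k) :=
    summable_geometric_of_lt_one hp0.le hp1
  have hsum : Summable (fun k : ℕ => p ^ k * u k) :=
    Summable.of_nonneg_of_le hterm_nonneg hterm_le hgeo
  set S := ∑' k : ℕ, p ^ k * u k with hS_def
  -- partial sum identity
  have hpartial : ∀ N : ℕ, lam * ∑ k ∈ Finset.range (N + 1), p ^ k * u k
      = lam * u 0 + β * (u N - u 0) + (1 - β) * (u 1 - u (N + 1)) := by
    intro N
    induction N with
    | zero => rw [Finset.sum_range_one]; ring
    | succ n ih =>
      rw [Finset.sum_range_succ, mul_add, ih]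
      have h := hrec (n + 1) (by omega)
      have hn : n + 1 - 1 = n := rfl
      rw [hn] at h
      nlinarith [h]
  -- limits
  have htendS : Tendsto (fun N => lam * ∑ k ∈ Finset.range (N + 1), p ^ k * u k)
      atTop (𝓝 (lam * S)) := by
    exact (hsum.hasSum.tendsto_sum_nat.comp (tendsto_add_atTop_nat 1)).const_mul lam
  have htendR : Tendsto (fun N => lam * u 0 + β * (u N - u 0) + (1 - β) * (u 1 - u (N + 1)))
      atTop (𝓝 (lam * u 0 + β * (0 - u 0) + (1 - β) * (u 1 - 0))) := by
    refine Tendsto.add (Tendsto.add tendsto_const_nhds ?_) ?_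
    · exact ((hlim.sub tendsto_const_nhds).const_mul β)
    · exact (((tendsto_const_nhds).sub (hlim.comp (tendsto_add_atTop_nat 1))).const_mul (1 - β))
  have hkey : lam * S = lam * u 0 + β * (0 - u 0) + (1 - β) * (u 1 - 0) := by
    have := htendS.congr (fun N => (hpartial N))
    exact tendsto_nhds_unique this htendR
  have hu1 : u 1 = 1 - lam := by linarith
  have hmain : lam * S = 1 - 2 * β + β * lam := by
    rw [hkey, hu0, hu1]; ring
  refine ⟨hmain, ?_, ?_⟩
  · -- lower bound: S ≤ (1-β)/(1-2β)
    have hSle : S ≤ (1 - β) / (1 - 2 * β) := by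
      have h2 : S ≤ ∑' k : ℕ, p ^ k := Summable.tsum_le_tsum hterm_le hsum hgeo
      have h3 : ∑' k : ℕ, p ^ k = (1 - p)⁻¹ := tsum_geometric_of_lt_one hp0.le hp1
      have h4 : 1 - p = (1 - 2 * β) / (1 - β) := by
        rw [hp_def]; field_simp; ring
      rw [h3, h4, inv_div] at h2
      exact h2
    have h12β : (0:ℝ) < 1 - 2 * β := by linarith
    have h5 : S * (1 - 2 * β) ≤ 1 - β := (le_div_iff₀ h12β).mp hSle
    have h6 : lam * (S * (1 - 2 * β)) ≤ lam * (1 - β) :=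
      mul_le_mul_of_nonneg_left h5 hl0.le
    rw [div_le_iff₀ (by positivity)]
    nlinarith [hmain, h6]
  · -- upper bound: S ≥ 1
    have hS1 : (1:ℝ) ≤ S := by
      have := Summable.le_tsum hsum 0 (fun k _ => hterm_nonneg k)
      simpa [hu0] using this
    rw [le_div_iff₀ h1β]
    nlinarith [hmain, mul_le_mul_of_nonneg_left hS1 hl0.le]
end
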